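/- Let G be a graph with nonnegative edge capacities and T a subset of its vertices. For subsets S of T, let cut_G(S) denote the minimum capacity of an edge cut separating S from T\S. Then cut_G is submodular: for all S, S' ⊆ T, cut_G(S) + cut_G(S') ≥ cut_G(S ∩ S') + cut_G(S ∪ S'). -/

import Mathlib

open Finset
open scoped Classical

/-- The total capacity of edges leaving the vertex set `A`. -/
noncomputable def crossCap {V : Type*} [Fintype V] (c : V → V → ℝ) (A : Finset V) : ℝ :=
  ∑ u ∈ A, ∑ v ∈ Aᶜ, c u v

/-- `cutVal c T S` is the minimum capacity of an edge cut separating the terminals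
in `S` from the terminals in `T \ S`: the minimum over all vertex sets `A` with
`S ⊆ A` and `A` disjoint from `T \ S` of the capacity crossing `A`. -/
noncomputable def cutVal {V : Type*} [Fintype V] (c : V → V → ℝ) (T S : Finset V) : ℝ :=
  Finset.inf' (Finset.univ.filter fun A : Finset V => S ⊆ A ∧ Disjoint (T \ S) A)
    ⟨S, by simp [Finset.sdiff_disjoint]⟩ (fun A => crossCap c A)

/-!
Pick minimum cuts `A` for `S` and `B` for `S'`. Then `A ∩ B` separates `S ∩ S'` and `A ∪ B`
separates `S ∪ S'` from the remaining terminals, so it suffices that the cut capacity of vertex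
sets is submodular. That holds edge by edge: an edge `(u, v)` leaving `A ∩ B` or `A ∪ B` also
leaves `A` or `B`, and one leaving both `A ∩ B` and `A ∪ B` leaves both `A` and `B`.
-/

section CrossCap

variable {V : Type*} [Fintype V] (c : V → V → ℝ)

lemma crossCap_eq_sum_ite (A : Finset V) :
    crossCap c A = ∑ u, ∑ v, if u ∈ A ∧ v ∉ A then c u v else 0 := by
  simp_rw [ite_and, ← mem_compl, sum_ite_irrel, sum_const_zero, sum_ite_mem, univ_inter]
  rfl

lemma crossCap_inter_add_crossCap_union_le (hc : ∀ u v, 0 ≤ c u v) (A B : Finset V) :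
    crossCap c (A ∩ B) + crossCap c (A ∪ B) ≤ crossCap c A + crossCap c B := by
  simp only [crossCap_eq_sum_ite, ← sum_add_distrib]
  refine sum_le_sum fun u _ => sum_le_sum fun v _ => ?_
  by_cases hA : u ∈ A <;> by_cases hB : u ∈ B <;> by_cases hA' : v ∈ A <;>
    by_cases hB' : v ∈ B <;> simp [hA, hB, hA', hB', hc u v]

end CrossCap

section CutVal

variable {V : Type*} [Fintype V] (c : V → V → ℝ) (T S : Finset V)

lemma cutVal_le_crossCap {A : Finset V} (hSA : S ⊆ A) (hA : Disjoint (T \ S) A) :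
    cutVal c T S ≤ crossCap c A :=
  inf'_le _ (by simpa using ⟨hSA, hA⟩)

lemma exists_crossCap_eq_cutVal :
    ∃ A, S ⊆ A ∧ Disjoint (T \ S) A ∧ crossCap c A = cutVal c T S := by
  obtain ⟨A, hA, hAeq⟩ := exists_mem_eq_inf' (s := univ.filter fun A : Finset V =>
    S ⊆ A ∧ Disjoint (T \ S) A) ⟨S, by simp [sdiff_disjoint]⟩ (crossCap c)
  simp only [mem_filter, mem_univ, true_and] at hA
  exact ⟨A, hA.1, hA.2, hAeq.symm⟩

end CutVal

section Separation

variable {V : Type*} [DecidableEq V] {T S S' A B : Finset V}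

lemma disjoint_sdiff_inter_inter (hA : Disjoint (T \ S) A) (hB : Disjoint (T \ S') B) :
    Disjoint (T \ (S ∩ S')) (A ∩ B) := by
  rw [sdiff_inter_distrib_right]
  exact (hA.mono_right inter_subset_left).sup_left (hB.mono_right inter_subset_right)

lemma disjoint_sdiff_union_union (hA : Disjoint (T \ S) A) (hB : Disjoint (T \ S') B) :
    Disjoint (T \ (S ∪ S')) (A ∪ B) :=
  disjoint_union_right.2 ⟨hA.mono_left (sdiff_subset_sdiff le_rfl subset_union_left),
    hB.mono_left (sdiff_subset_sdiff le_rfl subset_union_right)⟩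

end Separation

theorem terminal_cut_submodular_general {V : Type*} [Fintype V] (c : V → V → ℝ)
    (hc : ∀ u v, 0 ≤ c u v)
    (T S S' : Finset V) :
    cutVal c T (S ∩ S') + cutVal c T (S ∪ S') ≤ cutVal c T S + cutVal c T S' := by
  obtain ⟨A, hSA, hA, hAcut⟩ := exists_crossCap_eq_cutVal c T S
  obtain ⟨B, hSB, hB, hBcut⟩ := exists_crossCap_eq_cutVal c T S'
  calc cutVal c T (S ∩ S') + cutVal c T (S ∪ S')
      ≤ crossCap c (A ∩ B) + crossCap c (A ∪ B) :=
        add_le_add (cutVal_le_crossCap c T _ (inter_subset_inter hSA hSB)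
            (disjoint_sdiff_inter_inter hA hB))
          (cutVal_le_crossCap c T _ (union_subset_union hSA hSB)
            (disjoint_sdiff_union_union hA hB))
    _ ≤ crossCap c A + crossCap c B := crossCap_inter_add_crossCap_union_le c hc A B
    _ = cutVal c T S + cutVal c T S' := by rw [hAcut, hBcut]

/-- Submodularity of the terminal cut function. -/
theorem terminal_cut_submodular {V : Type*} [Fintype V] (c : V → V → ℝ)
    (hc : ∀ u v, 0 ≤ c u v) (hsym : ∀ u v, c u v = c v u)
    (T S S' : Finset V) (hS : S ⊆ T) (hS' : S' ⊆ T) :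
    cutVal c T (S ∩ S') + cutVal c T (S ∪ S') ≤ cutVal c T S + cutVal c T S' :=
  terminal_cut_submodular_general c hc T S S'
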